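/- arXiv:1210.1301 — 6 statements merged into one kernel-verified Lean document; each statement's English description precedes it below -/
import Mathlib

section
/- (Theorem 1, consistency of the regularized exact penalty problem.) Let F : ℝ^n → ℝ be continuous, G an m×n real matrix, g ∈ ℝ^m, and β > 0. Let (ε_k) be a sequence of positive reals with ε_k → 0, and for each k let x_k be a global minimizer of J_{ε_k}(x) = F(x) + β ψ_{ε_k}(Gx − g) over ℝ^n. If x_k converges to a point x̄ ∈ ℝ^n, then x̄ is a global minimizer of J(x) = F(x) + β ψ(Gx − g) over ℝ^n. -/
/-!
`φ_ε` is squeezed between `max 0` and `max 0 + ε/2`, so `J ≤ J_ε ≤ J + β m ε / 2` uniformly.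
Hence `J (x_k) ≤ J_{ε_k} (x_k) ≤ J_{ε_k} y ≤ J y + β m ε_k / 2`, and passing to the limit
along the closed sublevel sets of the continuous function `J` gives `J x̄ ≤ J y`.
-/

open Matrix

/-- The regularization `φ_ε` of `s ↦ max 0 s`. -/
noncomputable def phiEps (ε s : ℝ) : ℝ :=
  if s ≤ 0 then ε / 2 else if s ≤ ε then s ^ 2 / (2 * ε) + ε / 2 else s

/-- `ψ(y) = Σ_i max(0, y_i)`. -/
noncomputable def psi {m : ℕ} (y : Fin m → ℝ) : ℝ := ∑ i, max 0 (y i)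

/-- `ψ_ε(y) = Σ_i φ_ε(y_i)`. -/
noncomputable def psiEps (ε : ℝ) {m : ℕ} (y : Fin m → ℝ) : ℝ := ∑ i, phiEps ε (y i)

open Filter Topology Set

theorem LowerSemicontinuous.le_of_tendsto_minimizers {X ι : Type*} [TopologicalSpace X]
    {l : Filter ι} [l.NeBot] {J : X → ℝ} (hJ : LowerSemicontinuous J) {Jk : ι → X → ℝ}
    {c : ι → ℝ} (hc : Tendsto c l (𝓝 0)) (hlow : ∀ k z, J z ≤ Jk k z)
    (hup : ∀ k z, Jk k z ≤ J z + c k) {x : ι → X} (hmin : ∀ k y, Jk k (x k) ≤ Jk k y)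
    {xbar : X} (hx : Tendsto x l (𝓝 xbar)) (y : X) : J xbar ≤ J y := by
  refine le_of_forall_pos_le_add fun δ hδ => ?_
  have hsmall : ∀ᶠ k in l, c k < δ := hc.eventually (gt_mem_nhds hδ)
  have hsub : ∀ᶠ k in l, x k ∈ J ⁻¹' Iic (J y + δ) := hsmall.mono fun k hk =>
    calc J (x k) ≤ Jk k (x k) := hlow k (x k)
      _ ≤ Jk k y := hmin k y
      _ ≤ J y + c k := hup k y
      _ ≤ J y + δ := by linarith
  exact (hJ.isClosed_preimage _).mem_of_tendsto hx hsub

theorem max_zero_le_phiEps {ε : ℝ} (hε : 0 ≤ ε) (s : ℝ) : max 0 s ≤ phiEps ε s := by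
  unfold phiEps
  split_ifs with hs hsε
  · rw [max_eq_left hs]
    positivity
  · have hεpos : 0 < ε := by linarith
    rw [max_eq_right (not_le.1 hs).le, ← sub_nonneg]
    have hsq : s ^ 2 / (2 * ε) + ε / 2 - s = (s - ε) ^ 2 / (2 * ε) := by
      field_simp
      ring
    rw [hsq]
    positivity
  · exact (max_eq_right (not_le.1 hs).le).le

theorem phiEps_le_max_zero_add {ε : ℝ} (hε : 0 ≤ ε) (s : ℝ) : phiEps ε s ≤ max 0 s + ε / 2 := by
  unfold phiEps
  split_ifs with hs hsε
  · simp
  · have hs0 : 0 < s := not_le.1 hs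
    rw [max_eq_right hs0.le]
    have hquad : s ^ 2 / (2 * ε) ≤ s / 2 := by
      rw [div_le_div_iff₀ (by linarith) two_pos]
      nlinarith
    linarith
  · rw [max_eq_right (not_le.1 hs).le]
    linarith

theorem psi_le_psiEps {m : ℕ} {ε : ℝ} (hε : 0 ≤ ε) (y : Fin m → ℝ) : psi y ≤ psiEps ε y :=
  Finset.sum_le_sum fun i _ => max_zero_le_phiEps hε (y i)

theorem psiEps_le_psi_add {m : ℕ} {ε : ℝ} (hε : 0 ≤ ε) (y : Fin m → ℝ) :
    psiEps ε y ≤ psi y + m * (ε / 2) := by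
  have h := Finset.sum_le_sum fun i (_ : i ∈ Finset.univ) => phiEps_le_max_zero_add hε (y i)
  simpa [psiEps, psi, Finset.sum_add_distrib] using h

theorem continuous_psi {m : ℕ} : Continuous (psi (m := m)) :=
  continuous_finsetSum _ fun i _ => continuous_const.max (continuous_apply i)

/-- Theorem 1: consistency of the regularized exact penalty problem. -/
theorem stmt3 {n m : ℕ} (F : (Fin n → ℝ) → ℝ) (hF : Continuous F)
    (G : Matrix (Fin m) (Fin n) ℝ) (g : Fin m → ℝ) (β : ℝ) (hβ : 0 < β)
    (ε : ℕ → ℝ) (hεpos : ∀ k, 0 < ε k)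
    (hε0 : Filter.Tendsto ε Filter.atTop (nhds 0))
    (x : ℕ → Fin n → ℝ)
    (hmin : ∀ k, ∀ y : Fin n → ℝ,
      F (x k) + β * psiEps (ε k) (G.mulVec (x k) - g)
        ≤ F y + β * psiEps (ε k) (G.mulVec y - g))
    (xbar : Fin n → ℝ)
    (hconv : Filter.Tendsto x Filter.atTop (nhds xbar)) :
    ∀ y : Fin n → ℝ,
      F xbar + β * psi (G.mulVec xbar - g) ≤ F y + β * psi (G.mulVec y - g) := by
  have hJ : Continuous fun z => F z + β * psi (G.mulVec z - g) := by
    have hpen : Continuous fun z => psi (G *ᵥ z - g) := continuous_psi.comp (by fun_prop)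
    exact hF.add (continuous_const.mul hpen)
  have hc : Tendsto (fun k => β * (m * (ε k / 2))) atTop (𝓝 0) := by
    simpa using ((hε0.div_const 2).const_mul (m : ℝ)).const_mul β
  refine hJ.lowerSemicontinuous.le_of_tendsto_minimizers
    (Jk := fun k z => F z + β * psiEps (ε k) (G *ᵥ z - g)) hc (fun k z => ?_) (fun k z => ?_)
    hmin hconv
  · grw [psi_le_psiEps (hεpos k).le]
  · grw [psiEps_le_psi_add (hεpos k).le]
    linarith
end

section
/- For every ε > 0, the function s ↦ φ_ε(√s) is concave on the interval [0, ∞). -/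
/-!
The lines `s ↦ s / (2 t) + t / 2` with `t ≥ ε`, tangents of `√` at `t²`, lie above
`s ↦ φ_ε(√s)` on `[0, ∞)`, and the one with `t = max ε √s` touches it at `s`. So `φ_ε ∘ √` is a
pointwise attained infimum of affine functions, hence concave.
-/

section

variable {𝕜 E β ι : Type*} [Semiring 𝕜] [PartialOrder 𝕜] [AddCommMonoid E] [SMul 𝕜 E]
  [AddCommMonoid β] [PartialOrder β] [IsOrderedAddMonoid β] [Module 𝕜 β] [PosSMulMono 𝕜 β]
  {s : Set E} {f : E → β}

theorem concaveOn_of_forall_le_of_exists_eq {g : ι → E → β} (hs : Convex 𝕜 s)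
    (hg : ∀ i, ConcaveOn 𝕜 s (g i)) (hle : ∀ i, ∀ x ∈ s, f x ≤ g i x)
    (hattain : ∀ x ∈ s, ∃ i, g i x = f x) : ConcaveOn 𝕜 s f := by
  refine ⟨hs, fun x hx y hy a b ha hb hab => ?_⟩
  obtain ⟨i, hi⟩ := hattain _ (hs hx hy ha hb hab)
  calc a • f x + b • f y ≤ a • g i x + b • g i y :=
        add_le_add (smul_le_smul_of_nonneg_left (hle i x hx) ha)
          (smul_le_smul_of_nonneg_left (hle i y hy) hb)
    _ ≤ g i (a • x + b • y) := (hg i).2 hx hy ha hb hab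
    _ = f (a • x + b • y) := hi

end

lemma concaveOn_div_add_const (t : ℝ) (ht : 0 ≤ t) :
    ConcaveOn ℝ (Set.Ici 0) (fun s : ℝ => s / (2 * t) + t / 2) :=
  (((concaveOn_id (convex_Ici 0)).smul (by positivity : 0 ≤ (2 * t)⁻¹)).add_const (t / 2)).congr
    fun s _ => by simp [div_eq_inv_mul]

section

variable {ε u t : ℝ}

lemma phiEps_le_sq_div_add (hε : 0 < ε) (hu : 0 ≤ u) (ht : ε ≤ t) :
    phiEps ε u ≤ u ^ 2 / (2 * t) + t / 2 := by
  have ht0 : 0 < t := hε.trans_le ht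
  unfold phiEps
  split_ifs with hu0 huε
  · have : 0 ≤ u ^ 2 / (2 * t) := by positivity
    linarith
  · have key : u ^ 2 / (2 * t) + t / 2 - (u ^ 2 / (2 * ε) + ε / 2)
        = (t - ε) * (ε * t - u ^ 2) / (2 * ε * t) := by
      field_simp
      ring
    have : 0 ≤ (t - ε) * (ε * t - u ^ 2) / (2 * ε * t) :=
      div_nonneg (mul_nonneg (by linarith) (by nlinarith)) (by positivity)
    linarith
  · rw [div_add_div _ _ (by positivity) two_ne_zero, le_div_iff₀ (by positivity)]
    nlinarith [sq_nonneg (u - t)]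

lemma phiEps_eq_sq_div_add_max (hε : 0 < ε) (hu : 0 ≤ u) :
    phiEps ε u = u ^ 2 / (2 * max ε u) + max ε u / 2 := by
  unfold phiEps
  split_ifs with hu0 huε
  · simp [le_antisymm hu0 hu, hε.le]
  · rw [max_eq_left huε]
  · rw [max_eq_right (not_le.1 huε).le]
    field_simp
    ring

end

theorem stmt5 (ε : ℝ) (hε : 0 < ε) :
    ConcaveOn ℝ (Set.Ici (0 : ℝ)) (fun s => phiEps ε (Real.sqrt s)) := by
  refine concaveOn_of_forall_le_of_exists_eq
    (g := fun (t : {t : ℝ // ε ≤ t}) (s : ℝ) => s / (2 * (t : ℝ)) + (t : ℝ) / 2) (convex_Ici 0)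
    (fun t => concaveOn_div_add_const t (hε.le.trans t.2)) ?_ ?_
  · intro t s hs
    simpa [Real.sq_sqrt (Set.mem_Ici.1 hs)] using
      phiEps_le_sq_div_add hε (Real.sqrt_nonneg s) t.2
  · intro s hs
    refine ⟨⟨max ε (Real.sqrt s), le_max_left _ _⟩, ?_⟩
    simpa [Real.sq_sqrt (Set.mem_Ici.1 hs)] using
      (phiEps_eq_sq_div_add_max hε (Real.sqrt_nonneg s)).symm
end

section
/- Let ε > 0, b ≥ 0 and a ∈ ℝ. Then φ_ε(a) − φ_ε(b) ≤ (a² − b²)/(2·max(ε, b)). (This is the tangent-line inequality obtained from the concavity of s ↦ φ_ε(√s) on [0,∞), together with φ_ε(a) ≤ φ_ε(|a|).) -/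
/-! For `m ≥ ε`, the quadratic `s ↦ s ^ 2 / (2 m) + m / 2` majorizes `φ_ε`: in the variable
`t = s ^ 2` it is a tangent line of the concave function `t ↦ φ_ε (√t)`. With `m = max ε b`
it touches `φ_ε` at `b`, and subtracting the two values gives the inequality. -/

lemma phiEps_le_sq_div_add_half {ε m : ℝ} (hm : 0 < m) (hεm : ε ≤ m) (s : ℝ) :
    phiEps ε s ≤ s ^ 2 / (2 * m) + m / 2 := by
  unfold phiEps
  split_ifs with hs₀ hsε
  · have : 0 ≤ s ^ 2 / (2 * m) := by positivity
    linarith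
  · have hε : 0 < ε := (not_le.1 hs₀).trans_le hsε
    have hs_sq : s ^ 2 ≤ ε * m := by nlinarith
    rw [div_add_div _ _ (by positivity) two_ne_zero, div_add_div _ _ (by positivity) two_ne_zero,
      div_le_div_iff₀ (by positivity) (by positivity)]
    nlinarith [mul_nonneg (sub_nonneg.2 hεm) (sub_nonneg.2 hs_sq)]
  · rw [div_add_div _ _ (by positivity) two_ne_zero, le_div_iff₀ (by positivity)]
    nlinarith [sq_nonneg (s - m)]

lemma phiEps_eq_sq_div_add_half {ε b : ℝ} (hε : 0 ≤ ε) (hb : 0 ≤ b) :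
    phiEps ε b = b ^ 2 / (2 * max ε b) + max ε b / 2 := by
  unfold phiEps
  rcases le_or_gt b ε with hbε | hεb
  · rw [max_eq_left hbε]
    split_ifs with hb₀
    · simp [le_antisymm hb₀ hb]
    · rfl
  · rw [max_eq_right hεb.le, if_neg (by linarith), if_neg (not_le.2 hεb)]
    field_simp
    ring

/-- Tangent-line inequality from concavity of `s ↦ φ_ε(√s)` on `[0, ∞)`. -/
theorem stmt6 (ε a b : ℝ) (hε : 0 < ε) (hb : 0 ≤ b) :
    phiEps ε a - phiEps ε b ≤ (a ^ 2 - b ^ 2) / (2 * max ε b) := by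
  set m := max ε b
  have hm : 0 < m := lt_max_of_lt_left hε
  calc phiEps ε a - phiEps ε b
      ≤ (a ^ 2 / (2 * m) + m / 2) - (b ^ 2 / (2 * m) + m / 2) := by
        rw [phiEps_eq_sq_div_add_half hε.le hb]
        exact sub_le_sub_right (phiEps_le_sq_div_add_half hm (le_max_left ε b) a) _
    _ = (a ^ 2 - b ^ 2) / (2 * m) := by ring
end

section
/- (Theorem 3, descent property of Algorithm 1, one-step version.) Let F : ℝ^n → ℝ be differentiable, G an m×n real matrix, g ∈ ℝ^m, α > 0, β > 0, ε > 0, ω > 0, and P an n×n real matrix. Let x, x⁺ ∈ ℝ^n, d = x⁺ − x, A = { j : (Gx − g)_j ≥ 0 }, and let X be the diagonal m×m matrix with X_{jj} = 1/max(ε, (Gx − g)_j) for j ∈ A and X_{jj} = 0 otherwise. Assume: (i) x⁺ satisfies α P d + ∇F(x) + β Gᵗ X (G x⁺ − g) = 0; (ii) α⟨P d, d⟩ − (F(x⁺) − F(x) − ⟨∇F(x), d⟩) ≥ ω‖d‖²; (iii) for every i with (Gx − g)_i < 0 one has (G x⁺ − g)_i ≤ 0. Then ω‖x⁺ − x‖²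 + J_ε(x⁺) ≤ J_ε(x), where J_ε(x) = F(x) + β ψ_ε(Gx − g). In particular J_ε decreases strictly along the iteration whenever x⁺ ≠ x. -/
open Matrix

/-!
Majorization–minimization. For every `c ≥ ε` the quadratic `q_c(s) = s² / (2c) + c / 2`
majorizes `φ_ε`, and touches it at `s = u ≥ 0` for `c = max ε u`. Hence on the active
coordinates `φ_ε(v) - φ_ε(u) ≤ q_c(v) - q_c(u) ≤ q_c'(v) (v - u) = v (v - u) / max ε u`, the last
step being convexity of `q_c`; on the inactive ones both values equal `ε / 2` by assumption (iii).
Summing gives `ψ_ε(Gx⁺ - g) - ψ_ε(Gx - g) ≤ ⟨X (Gx⁺ - g), G d⟩`, and by the optimality condition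
(i) tested against `d`, `β` times the right side is `-α⟨Pd, d⟩ - ⟨∇F(x), d⟩`; condition (ii)
finishes the proof.
-/

lemma phiEps_of_nonpos {ε s : ℝ} (hs : s ≤ 0) : phiEps ε s = ε / 2 := if_pos hs

lemma phiEps_le_quadratic {ε c : ℝ} (hε : 0 < ε) (hc : ε ≤ c) (v : ℝ) :
    phiEps ε v ≤ v ^ 2 / (2 * c) + c / 2 := by
  have hc0 : 0 < c := hε.trans_le hc
  unfold phiEps
  split_ifs with hv₀ hvε
  · have : 0 ≤ v ^ 2 / (2 * c) := by positivity
    linarith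
  · have gap : v ^ 2 / (2 * c) + c / 2 - (v ^ 2 / (2 * ε) + ε / 2)
        = (c - ε) * (ε * c - v ^ 2) / (2 * ε * c) := by
      field_simp
      ring
    have : 0 ≤ (c - ε) * (ε * c - v ^ 2) / (2 * ε * c) := by
      apply div_nonneg _ (by positivity)
      exact mul_nonneg (by linarith) (by nlinarith)
    linarith
  · have gap : v ^ 2 / (2 * c) + c / 2 - v = (v - c) ^ 2 / (2 * c) := by
      field_simp
      ring
    have : 0 ≤ (v - c) ^ 2 / (2 * c) := by positivity
    linarith

lemma phiEps_eq_quadratic_of_nonneg {ε u : ℝ} (hε : 0 < ε) (hu : 0 ≤ u) :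
    phiEps ε u = u ^ 2 / (2 * max ε u) + max ε u / 2 := by
  unfold phiEps
  rcases le_or_gt u ε with huε | hεu
  · rw [max_eq_left huε]
    split_ifs with hu₀
    · simp [le_antisymm hu₀ hu]
    · rfl
  · rw [max_eq_right hεu.le, if_neg (by linarith), if_neg (by linarith)]
    field_simp
    ring

lemma phiEps_sub_le {ε u : ℝ} (hε : 0 < ε) (hu : 0 ≤ u) (v : ℝ) :
    phiEps ε v - phiEps ε u ≤ 1 / max ε u * v * (v - u) := by
  have hc : 0 < max ε u := hε.trans_le (le_max_left ε u)
  have convexity : 1 / max ε u * v * (v - u) - (v ^ 2 / (2 * max ε u) - u ^ 2 / (2 * max ε u))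
      = (v - u) ^ 2 / (2 * max ε u) := by
    field_simp
    ring
  have : 0 ≤ (v - u) ^ 2 / (2 * max ε u) := by positivity
  linarith [phiEps_le_quadratic hε (le_max_left ε u) v, phiEps_eq_quadratic_of_nonneg hε hu]

/-- The diagonal of the matrix `X` of Algorithm 1 at the residual `u = Gx - g`. -/
noncomputable def activeWeights (ε : ℝ) {m : ℕ} (u : Fin m → ℝ) : Fin m → ℝ :=
  fun j => if 0 ≤ u j then 1 / max ε (u j) else 0

lemma psiEps_sub_le {ε : ℝ} (hε : 0 < ε) {m : ℕ} {u v : Fin m → ℝ}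
    (hinactive : ∀ i, u i < 0 → v i ≤ 0) :
    psiEps ε v - psiEps ε u ≤ (diagonal (activeWeights ε u) *ᵥ v) ⬝ᵥ (v - u) := by
  rw [psiEps, psiEps, ← Finset.sum_sub_distrib, dotProduct]
  refine Finset.sum_le_sum fun j _ => ?_
  simp only [mulVec_diagonal, activeWeights, Pi.sub_apply]
  split_ifs with hu
  · exact phiEps_sub_le hε hu (v j)
  · have hu' : u j < 0 := not_le.mp hu
    rw [phiEps_of_nonpos (hinactive j hu'), phiEps_of_nonpos hu'.le]
    simp

lemma dotProduct_self_pos {ι R : Type*} [Fintype ι] [Ring R] [LinearOrder R]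
    [IsStrictOrderedRing R] {v : ι → R} (hv : v ≠ 0) : 0 < v ⬝ᵥ v :=
  (Fintype.sum_nonneg fun i => mul_self_nonneg (v i)).lt_of_ne
    (Ne.symm (dotProduct_self_eq_zero.not.mpr hv))

theorem stmt10_general {n m : ℕ} (F : (Fin n → ℝ) → ℝ)
    (G : Matrix (Fin m) (Fin n) ℝ) (g : Fin m → ℝ)
    (α β ε ω : ℝ) (hβ : 0 < β) (hε : 0 < ε) (hω : 0 < ω)
    (P : Matrix (Fin n) (Fin n) ℝ)
    (x xp d : Fin n → ℝ) (hd : d = xp - x)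
    (Fx' : Fin n → ℝ)
    (X : Matrix (Fin m) (Fin m) ℝ)
    (hX : X = Matrix.diagonal fun j =>
      if 0 ≤ (G.mulVec x - g) j then 1 / max ε ((G.mulVec x - g) j) else 0)
    (hupdate : α • P.mulVec d + Fx' + β • Gᵀ.mulVec (X.mulVec (G.mulVec xp - g)) = 0)
    (hR : α * (P.mulVec d ⬝ᵥ d) - (F xp - F x - Fx' ⬝ᵥ d) ≥ ω * (d ⬝ᵥ d))
    (hI : ∀ i, (G.mulVec x - g) i < 0 → (G.mulVec xp - g) i ≤ 0) :
    ω * (d ⬝ᵥ d) + (F xp + β * psiEps ε (G.mulVec xp - g))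
        ≤ F x + β * psiEps ε (G.mulVec x - g) ∧
    (xp ≠ x →
      F xp + β * psiEps ε (G.mulVec xp - g) < F x + β * psiEps ε (G.mulVec x - g)) := by
  have hGd : G *ᵥ d = (G *ᵥ xp - g) - (G *ᵥ x - g) := by
    rw [hd, mulVec_sub, sub_sub_sub_cancel_right]
  have optimality : α * (P *ᵥ d ⬝ᵥ d) + Fx' ⬝ᵥ d
      + β * ((X *ᵥ (G *ᵥ xp - g)) ⬝ᵥ (G *ᵥ d)) = 0 := by
    have := congrArg (· ⬝ᵥ d) hupdate
    simpa only [add_dotProduct, smul_dotProduct, smul_eq_mul, zero_dotProduct, mulVec_transpose,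
      ← dotProduct_mulVec] using this
  have hψ : psiEps ε (G *ᵥ xp - g) - psiEps ε (G *ᵥ x - g)
      ≤ (X *ᵥ (G *ᵥ xp - g)) ⬝ᵥ (G *ᵥ d) := by
    rw [hX, hGd]
    exact psiEps_sub_le hε hI
  have descent : ω * (d ⬝ᵥ d) + (F xp + β * psiEps ε (G *ᵥ xp - g))
      ≤ F x + β * psiEps ε (G *ᵥ x - g) := by
    linarith [mul_le_mul_of_nonneg_left hψ hβ.le]
  refine ⟨descent, fun hne => ?_⟩
  have hd0 : d ≠ 0 := hd ▸ sub_ne_zero.mpr hne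
  linarith [mul_pos hω (dotProduct_self_pos hd0)]

/-- Theorem 3: one-step descent property of Algorithm 1.  Here `d ⬝ᵥ d = ‖d‖²`
is the squared Euclidean norm. -/
theorem stmt10 {n m : ℕ} (F : (Fin n → ℝ) → ℝ) (hF : Differentiable ℝ F)
    (G : Matrix (Fin m) (Fin n) ℝ) (g : Fin m → ℝ)
    (α β ε ω : ℝ) (hα : 0 < α) (hβ : 0 < β) (hε : 0 < ε) (hω : 0 < ω)
    (P : Matrix (Fin n) (Fin n) ℝ)
    (x xp d : Fin n → ℝ) (hd : d = xp - x)
    (Fx' : Fin n → ℝ) (hgrad : ∀ v : Fin n → ℝ, fderiv ℝ F x v = Fx' ⬝ᵥ v)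
    (X : Matrix (Fin m) (Fin m) ℝ)
    (hX : X = Matrix.diagonal fun j =>
      if 0 ≤ (G.mulVec x - g) j then 1 / max ε ((G.mulVec x - g) j) else 0)
    (hupdate : α • P.mulVec d + Fx' + β • Gᵀ.mulVec (X.mulVec (G.mulVec xp - g)) = 0)
    (hR : α * (P.mulVec d ⬝ᵥ d) - (F xp - F x - Fx' ⬝ᵥ d) ≥ ω * (d ⬝ᵥ d))
    (hI : ∀ i, (G.mulVec x - g) i < 0 → (G.mulVec xp - g) i ≤ 0) :
    ω * (d ⬝ᵥ d) + (F xp + β * psiEps ε (G.mulVec xp - g))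
        ≤ F x + β * psiEps ε (G.mulVec x - g) ∧
    (xp ≠ x →
      F xp + β * psiEps ε (G.mulVec xp - g) < F x + β * psiEps ε (G.mulVec x - g)) :=
  stmt10_general F G g α β ε ω hβ hε hω P x xp d hd Fx' X hX hupdate hR hI
end

section
/- (Global convergence of Algorithm 1 on the scalar model problem, feasible case.) Let ε > 0, g < 0 and β > ε − g. Define Φ : ℝ → ℝ by Φ(x) = x − ( x + β·max(x−g, 0)/max(x−g, ε) ) / ( 1 + β·sgn(x−g)/max(x−g, ε) ), where sgn(s) = 1 if s ≥ 0 and sgn(s) = 0 if s < 0. Then for every initial point x⁰ ∈ ℝ, the iterates x^k = Φ^[k](x⁰) converge to x̄ = βg/(ε + β) as k → ∞. -/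
/-!
Below `g` the map `Φ = PhiMap ε g β` is `0`, on `[g, g + ε]` it is constant equal to the fixed
point `x̄ = βg/(ε + β)`, and for `x ≥ g + ε` it is `βg/(x - g + β)`. Hence `Φ x ≥ g` for every `x`,
and above `g + ε` the distance to `g` shrinks at least by the factor `-g/(ε + β) < 1`. So every
orbit enters `[g, g + ε]` after finitely many steps, and is equal to `x̄` from then on.
-/

/-- `sgn(s) = 1` if `s ≥ 0`, `0` if `s < 0`. -/
noncomputable def sgn (s : ℝ) : ℝ := if 0 ≤ s then 1 else 0

/-- The explicit form of the implicit fixed point iteration (Algorithm 1) for the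
scalar model problem `min x²/2 + β φ_ε(x − g)`. -/
noncomputable def PhiMap (ε g β x : ℝ) : ℝ :=
  x - (x + β * max (x - g) 0 / max (x - g) ε) / (1 + β * sgn (x - g) / max (x - g) ε)

open Filter Topology Function

theorem tendsto_iterate_of_iterate_eq_isFixedPt {α : Type*} [TopologicalSpace α] {f : α → α}
    {x a : α} (ha : IsFixedPt f a) {n : ℕ} (hn : f^[n] x = a) :
    Tendsto (fun k => f^[k] x) atTop (𝓝 a) :=
  tendsto_atTop_of_eventually_const (i₀ := n) fun k hk => by
    rw [← Nat.sub_add_cancel hk, iterate_add_apply, hn, (ha.iterate _).eq]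

section PhiMap

variable {ε g β x : ℝ}

theorem PhiMap_of_lt (h : x < g) : PhiMap ε g β x = 0 := by
  unfold PhiMap sgn
  rw [if_neg (by linarith), max_eq_right (by linarith)]
  simp

theorem PhiMap_of_le_of_sub_le (hε : 0 < ε) (hβ : 0 < β) (h₁ : g ≤ x) (h₂ : x - g ≤ ε) :
    PhiMap ε g β x = β * g / (ε + β) := by
  unfold PhiMap sgn
  rw [if_pos (by linarith), max_eq_left (by linarith), max_eq_right h₂]
  have : 1 + β * 1 / ε ≠ 0 := by positivity
  field_simp
  ring

theorem PhiMap_of_le_sub (hε : 0 < ε) (hβ : 0 < β) (h : ε ≤ x - g) :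
    PhiMap ε g β x = β * g / (x - g + β) := by
  have hxg : 0 < x - g := hε.trans_le h
  unfold PhiMap sgn
  rw [if_pos hxg.le, max_eq_left hxg.le, max_eq_left h]
  have : 1 + β * 1 / (x - g) ≠ 0 := by positivity
  field_simp
  ring

theorem le_div_add_of_nonpos (hε : 0 < ε) (hg : g ≤ 0) (hβ : 0 < β) :
    g ≤ β * g / (ε + β) := by
  rw [le_div_iff₀ (by positivity)]
  nlinarith

theorem le_PhiMap (hε : 0 < ε) (hg : g ≤ 0) (hβ : 0 < β) (x : ℝ) : g ≤ PhiMap ε g β x := by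
  rcases lt_or_ge x g with hx | hx
  · rw [PhiMap_of_lt hx]
    exact hg
  rcases le_total (x - g) ε with hxε | hxε
  · rw [PhiMap_of_le_of_sub_le hε hβ hx hxε]
    exact le_div_add_of_nonpos hε hg hβ
  · rw [PhiMap_of_le_sub hε hβ hxε]
    exact le_div_add_of_nonpos (hε.trans_le hxε) hg hβ

theorem isFixedPt_PhiMap (hε : 0 < ε) (hg : g ≤ 0) (hβ : 0 < β) (hgβ : -g < ε + β) :
    IsFixedPt (PhiMap ε g β) (β * g / (ε + β)) := by
  have hle : g ≤ β * g / (ε + β) := le_div_add_of_nonpos hε hg hβ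
  refine PhiMap_of_le_of_sub_le hε hβ hle ?_
  rw [sub_le_iff_le_add, div_le_iff₀ (by positivity)]
  nlinarith

theorem PhiMap_sub_le (hε : 0 < ε) (hg : g ≤ 0) (hβ : 0 < β) (h : ε ≤ x - g) :
    PhiMap ε g β x - g ≤ -g / (ε + β) * (x - g) := by
  have hxg : 0 < x - g := hε.trans_le h
  have hdist : PhiMap ε g β x - g = -g * (x - g) / (x - g + β) := by
    rw [PhiMap_of_le_sub hε hβ h]
    field_simp
    ring
  rw [hdist, div_mul_eq_mul_div, div_le_div_iff₀ (by positivity) (by positivity)]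
  have : 0 ≤ -g * (x - g) := mul_nonneg (by linarith) hxg.le
  nlinarith

theorem exists_iterate_PhiMap_eq_of_pow_mul_le (hε : 0 < ε) (hg : g ≤ 0) (hβ : 0 < β) (n : ℕ) :
    ∀ x, g ≤ x → (-g / (ε + β)) ^ n * (x - g) ≤ ε →
      ∃ m, (PhiMap ε g β)^[m] x = β * g / (ε + β) := by
  have hq : 0 ≤ -g / (ε + β) := div_nonneg (by linarith) (by positivity)
  induction n with
  | zero =>
    intro x hx hxε
    exact ⟨1, PhiMap_of_le_of_sub_le hε hβ hx (by simpa using hxε)⟩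
  | succ n ih =>
    intro x hx hxε
    rcases le_total (x - g) ε with hxε' | hxε'
    · exact ⟨1, PhiMap_of_le_of_sub_le hε hβ hx hxε'⟩
    have hstep : (-g / (ε + β)) ^ n * (PhiMap ε g β x - g) ≤ ε :=
      calc (-g / (ε + β)) ^ n * (PhiMap ε g β x - g)
          ≤ (-g / (ε + β)) ^ n * (-g / (ε + β) * (x - g)) :=
            mul_le_mul_of_nonneg_left (PhiMap_sub_le hε hg hβ hxε') (pow_nonneg hq n)
        _ = (-g / (ε + β)) ^ (n + 1) * (x - g) := by ring
        _ ≤ ε := hxε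
    obtain ⟨m, hm⟩ := ih _ (le_PhiMap hε hg hβ x) hstep
    exact ⟨m + 1, by rwa [iterate_succ_apply]⟩

theorem exists_iterate_PhiMap_eq (hε : 0 < ε) (hg : g ≤ 0) (hβ : 0 < β) (hgβ : -g < ε + β)
    (x : ℝ) : ∃ n, (PhiMap ε g β)^[n] x = β * g / (ε + β) := by
  have hq0 : 0 ≤ -g / (ε + β) := div_nonneg (by linarith) (by positivity)
  have hq1 : -g / (ε + β) < 1 := (div_lt_one (by positivity)).2 hgβ
  have hlim : Tendsto (fun n => (-g / (ε + β)) ^ n * (PhiMap ε g β x - g)) atTop (𝓝 0) := by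
    simpa using (tendsto_pow_atTop_nhds_zero_of_lt_one hq0 hq1).mul_const (PhiMap ε g β x - g)
  obtain ⟨n, hn⟩ := (hlim.eventually (ge_mem_nhds hε)).exists
  obtain ⟨m, hm⟩ :=
    exists_iterate_PhiMap_eq_of_pow_mul_le hε hg hβ n _ (le_PhiMap hε hg hβ x) hn
  exact ⟨m + 1, by rwa [iterate_succ_apply]⟩

end PhiMap

/-- Global convergence of Algorithm 1 on the scalar model problem (feasible case). -/
theorem stmt14 (ε g β : ℝ) (hε : 0 < ε) (hg : g < 0) (hβ : ε - g < β) :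
    ∀ x0 : ℝ,
      Filter.Tendsto (fun k : ℕ => (PhiMap ε g β)^[k] x0) Filter.atTop
        (nhds (β * g / (ε + β))) := by
  have hβ0 : 0 < β := by linarith
  have hgβ : -g < ε + β := by linarith
  intro x0
  obtain ⟨n, hn⟩ := exists_iterate_PhiMap_eq hε hg.le hβ0 hgβ x0
  exact tendsto_iterate_of_iterate_eq_isFixedPt (isFixedPt_PhiMap hε hg.le hβ0 hgβ) hn
end

section
/- (Finite termination of Algorithm 1 on the scalar model problem, active case.) Let ε > 0, β > 0 and g > 0. Define Φ : ℝ → ℝ by Φ(x) = x − ( x + β·max(x−g, 0)/max(x−g, ε) ) / ( 1 + β·sgn(x−g)/max(x−g, ε) ), where sgn(s) = 1 if s ≥ 0 and sgn(s) = 0 if s < 0. Then for every initial point x⁰ ∈ ℝ and every k ≥ 2, the iterate x^k = Φ^[k](x⁰) equals 0. -/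
theorem PhiMap_eq_zero_of_lt {ε g β x : ℝ} (h : x < g) : PhiMap ε g β x = 0 := by
  have hneg : x - g < 0 := sub_neg.mpr h
  simp [PhiMap, sgn, max_eq_right hneg.le, hneg.not_ge]

theorem PhiMap_eq_of_le {ε g β x : ℝ} (hε : 0 < ε) (hβ : 0 ≤ β) (h : g ≤ x) :
    PhiMap ε g β x = β * g / (max (x - g) ε + β) := by
  have hm : 0 < max (x - g) ε := lt_max_of_lt_right hε
  have hmβ : max (x - g) ε + β ≠ 0 := by positivity
  rw [PhiMap, max_eq_left (sub_nonneg.mpr h), sgn, if_pos (sub_nonneg.mpr h)]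
  field_simp
  ring

theorem PhiMap_lt {ε g β : ℝ} (hε : 0 < ε) (hβ : 0 ≤ β) (hg : 0 < g) (x : ℝ) :
    PhiMap ε g β x < g := by
  rcases lt_or_ge x g with h | h
  · rwa [PhiMap_eq_zero_of_lt h]
  · have hm : 0 < max (x - g) ε := lt_max_of_lt_right hε
    rw [PhiMap_eq_of_le hε hβ h, div_lt_iff₀ (by positivity)]
    nlinarith [mul_pos hg hm]

theorem PhiMap_iterate_two {ε g β : ℝ} (hε : 0 < ε) (hβ : 0 ≤ β) (hg : 0 < g) (x : ℝ) :
    (PhiMap ε g β)^[2] x = 0 :=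
  PhiMap_eq_zero_of_lt (PhiMap_lt hε hβ hg x)

/-- Finite termination of Algorithm 1 on the scalar model problem (active case). -/
theorem stmt15 (ε g β : ℝ) (hε : 0 < ε) (hβ : 0 < β) (hg : 0 < g) :
    ∀ x0 : ℝ, ∀ k : ℕ, 2 ≤ k → (PhiMap ε g β)^[k] x0 = 0 := by
  intro x0 k hk
  obtain ⟨j, rfl⟩ := Nat.exists_eq_add_of_le' hk
  rw [Function.iterate_add_apply, PhiMap_iterate_two hε hβ.le hg]
  exact Function.iterate_fixed (PhiMap_eq_zero_of_lt hg) j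
end
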